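/- If W ⟂ Y | (Z, X) and additionally Z ⟂ W | (Y', X) for some function Y' of Y, then for the specific choice φ(x, z) = P(Y = 1 | X = x, Z = z) (Y binary), we have P(Y = 1 | W = w, X = x, φ(X,Z) = f) = f for every f in the range of φ with positive conditional probability; in particular this conditional probability does not depend on w, hence W ⟂ Y | (φ(X,Z), X). -/

import Mathlib

/-!
By `W ⟂ Y | (Z, X)`, the conditional probability of `Y = 1` given `(W, Z, X)` is `φ(X, Z)`,
which is a function of the coarser statistic `T = (φ(X, Z), X)`. A conditional probability
given a finer statistic that only depends on a coarser one equals the conditional probability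
given the coarser one (sum over the fibres), so `P(Y = 1 | W, T) = T.1`. Since `Y` is binary,
a conditional law of `Y` given `(W, T)` that does not depend on `W` is exactly `W ⟂ Y | T`.
-/

open Finset

attribute [local instance] Classical.propDecidable

/-- Probability of an event on a finite outcome space. -/
noncomputable def Pr {Ω : Type*} [Fintype Ω] (p : Ω → ℝ) (E : Ω → Prop) : ℝ :=
  ∑ ω, if E ω then p ω else 0

/-- Conditional probability `P(E | F)`. -/
noncomputable def condPr {Ω : Type*} [Fintype Ω] (p : Ω → ℝ) (E F : Ω → Prop) : ℝ :=
  Pr p (fun ω => E ω ∧ F ω) / Pr p F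

/-- Conditional independence of `A` and `B` given `S`, via factorization of the joint law. -/
def CondIndepOn {Ω α β γ : Type*} [Fintype Ω] (p : Ω → ℝ)
    (A : Ω → α) (B : Ω → β) (S : Ω → γ) : Prop :=
  ∀ a b s,
    Pr p (fun ω => A ω = a ∧ B ω = b ∧ S ω = s) * Pr p (fun ω => S ω = s) =
    Pr p (fun ω => A ω = a ∧ S ω = s) * Pr p (fun ω => B ω = b ∧ S ω = s)

section FiniteProbability

variable {Ω α β γ : Type*} [Fintype Ω] (p : Ω → ℝ)

lemma Pr_congr {E F : Ω → Prop} (h : ∀ ω, E ω ↔ F ω) : Pr p E = Pr p F := by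
  rw [funext fun ω => propext (h ω)]

lemma Pr_eq_sum_image (V : Ω → α) (E : Ω → Prop) :
    Pr p E = ∑ v ∈ univ.image V, Pr p (fun ω => V ω = v ∧ E ω) := by
  unfold Pr
  rw [sum_comm]
  refine sum_congr rfl fun ω _ => ?_
  by_cases hE : E ω <;> simp [hE]

lemma Pr_and_comp_eq_sum (E : Ω → Prop) (S : Ω → α) (G : α → β) (t : β) :
    Pr p (fun ω => E ω ∧ G (S ω) = t)
      = ∑ s ∈ (univ.image S).filter (G · = t), Pr p (fun ω => E ω ∧ S ω = s) := by
  unfold Pr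
  rw [sum_comm]
  refine sum_congr rfl fun ω _ => ?_
  by_cases hE : E ω <;> simp [hE]

lemma Pr_eq_mul_of_forall_fiber (V : Ω → α) {E F : Ω → Prop} (r : ℝ)
    (h : ∀ v, Pr p (fun ω => V ω = v ∧ E ω) = r * Pr p (fun ω => V ω = v ∧ F ω)) :
    Pr p E = r * Pr p F := by
  rw [Pr_eq_sum_image p V E, Pr_eq_sum_image p V F, mul_sum]
  exact sum_congr rfl fun v _ => h v

lemma Pr_and_zero_and (Y : Ω → Fin 2) (E F : Ω → Prop) :
    Pr p (fun ω => E ω ∧ Y ω = 0 ∧ F ω)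
      = Pr p (fun ω => E ω ∧ F ω) - Pr p (fun ω => E ω ∧ Y ω = 1 ∧ F ω) := by
  unfold Pr
  rw [← sum_sub_distrib]
  refine sum_congr rfl fun ω _ => ?_
  rcases Fin.exists_fin_two.1 ⟨Y ω, rfl⟩ with h | h <;> by_cases hE : E ω <;> simp [h, hE]

lemma condPr_eq_of_Pr_and_eq_mul {E F : Ω → Prop} {c : ℝ}
    (h : Pr p (fun ω => E ω ∧ F ω) = c * Pr p F) (hF : Pr p F ≠ 0) : condPr p E F = c := by
  rw [condPr, h, mul_div_cancel_right₀ _ hF]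

/-- Tower property: if `P(A | E, S)` only depends on `G S`, then it is also `P(A | E, G S)`. -/
lemma Pr_and_and_comp_eq_mul (E A : Ω → Prop) (S : Ω → α) (G : α → β) (h : β → ℝ)
    (hS : ∀ s, Pr p (fun ω => E ω ∧ A ω ∧ S ω = s) = h (G s) * Pr p (fun ω => E ω ∧ S ω = s))
    (t : β) :
    Pr p (fun ω => E ω ∧ A ω ∧ G (S ω) = t) = h t * Pr p (fun ω => E ω ∧ G (S ω) = t) := by
  calc Pr p (fun ω => E ω ∧ A ω ∧ G (S ω) = t)
      = Pr p (fun ω => (E ω ∧ A ω) ∧ G (S ω) = t) := Pr_congr p fun ω => and_assoc.symm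
    _ = ∑ s ∈ (univ.image S).filter (G · = t), Pr p (fun ω => (E ω ∧ A ω) ∧ S ω = s) :=
        Pr_and_comp_eq_sum p _ S G t
    _ = ∑ s ∈ (univ.image S).filter (G · = t), h t * Pr p (fun ω => E ω ∧ S ω = s) := by
        refine sum_congr rfl fun s hs => ?_
        rw [← (mem_filter.1 hs).2, ← hS s]
        exact Pr_congr p fun ω => and_assoc
    _ = h t * Pr p (fun ω => E ω ∧ G (S ω) = t) := by
        rw [← mul_sum, Pr_and_comp_eq_sum]

lemma CondIndepOn.Pr_eq_condPr_mul {A : Ω → α} {B : Ω → β} {S : Ω → γ}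
    (h : CondIndepOn p A B S) (a : α) (b : β) (s : γ) (hs : Pr p (fun ω => S ω = s) ≠ 0) :
    Pr p (fun ω => A ω = a ∧ B ω = b ∧ S ω = s)
      = condPr p (fun ω => B ω = b) (fun ω => S ω = s) * Pr p (fun ω => A ω = a ∧ S ω = s) := by
  rw [condPr, div_mul_eq_mul_div, eq_div_iff hs, h, mul_comm]

lemma condIndepOn_of_forall_Pr_eq_mul {A : Ω → α} {B : Ω → β} {S : Ω → γ} (c : β → γ → ℝ)
    (h : ∀ a b s, Pr p (fun ω => A ω = a ∧ B ω = b ∧ S ω = s)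
      = c b s * Pr p (fun ω => A ω = a ∧ S ω = s)) :
    CondIndepOn p A B S := by
  intro a b s
  rw [h, Pr_eq_mul_of_forall_fiber p A (c b s) (h · b s)]
  ring

lemma condIndepOn_of_fin_two {A : Ω → α} {Y : Ω → Fin 2} {S : Ω → γ} (c : γ → ℝ)
    (h : ∀ a s, Pr p (fun ω => A ω = a ∧ Y ω = 1 ∧ S ω = s)
      = c s * Pr p (fun ω => A ω = a ∧ S ω = s)) :
    CondIndepOn p A Y S := by
  refine condIndepOn_of_forall_Pr_eq_mul p (fun y s => if y = 1 then c s else 1 - c s)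
    fun a y s => ?_
  rcases Fin.exists_fin_two.1 ⟨y, rfl⟩ with rfl | rfl
  · rw [Pr_and_zero_and, h, if_neg zero_ne_one]
    ring
  · rw [h, if_pos rfl]

end FiniteProbability

theorem stmt7_general {Ω 𝓦 𝓧 𝓩 : Type*} [Fintype Ω]
    (p : Ω → ℝ)
    (W : Ω → 𝓦) (X : Ω → 𝓧) (Z : Ω → 𝓩) (Y : Ω → Fin 2)
    (hWY : CondIndepOn p W Y (fun ω => (Z ω, X ω)))
    (φ : 𝓧 → 𝓩 → ℝ)
    (hφ : ∀ x z, φ x z = condPr p (fun ω => Y ω = 1) (fun ω => X ω = x ∧ Z ω = z))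
    (hpos : ∀ x z, 0 < Pr p (fun ω => X ω = x ∧ Z ω = z)) :
    (∀ (w : 𝓦) (x : 𝓧) (f : ℝ),
      0 < Pr p (fun ω => W ω = w ∧ X ω = x ∧ φ x (Z ω) = f) →
      condPr p (fun ω => Y ω = 1) (fun ω => W ω = w ∧ X ω = x ∧ φ x (Z ω) = f) = f) ∧
    CondIndepOn p W Y (fun ω => (φ (X ω) (Z ω), X ω)) := by
  have hZX : ∀ z x, (fun ω => (Z ω, X ω) = (z, x)) = fun ω => X ω = x ∧ Z ω = z :=
    fun z x => funext fun ω => propext (Prod.mk_inj.trans and_comm)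
  have hfine : ∀ w s, Pr p (fun ω => W ω = w ∧ Y ω = 1 ∧ (Z ω, X ω) = s)
      = φ s.2 s.1 * Pr p (fun ω => W ω = w ∧ (Z ω, X ω) = s) := by
    rintro w ⟨z, x⟩
    rw [hWY.Pr_eq_condPr_mul p w 1 (z, x) (by rw [hZX]; exact (hpos x z).ne'), hZX, ← hφ]
  have hcoarse : ∀ w f x, Pr p (fun ω => W ω = w ∧ Y ω = 1 ∧ (φ (X ω) (Z ω), X ω) = (f, x))
      = f * Pr p (fun ω => W ω = w ∧ (φ (X ω) (Z ω), X ω) = (f, x)) := fun w f x =>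
    Pr_and_and_comp_eq_mul p _ _ _ (fun s : 𝓩 × 𝓧 => (φ s.2 s.1, s.2)) Prod.fst (hfine w) (f, x)
  refine ⟨fun w x f hD => condPr_eq_of_Pr_and_eq_mul p ?_ hD.ne',
    condIndepOn_of_fin_two p _ fun w t => hcoarse w t.1 t.2⟩
  have hlevel : ∀ ω, (φ (X ω) (Z ω), X ω) = (f, x) ↔ X ω = x ∧ φ x (Z ω) = f := fun ω =>
    ⟨fun h => by obtain ⟨h1, rfl⟩ := Prod.mk_inj.1 h; exact ⟨rfl, h1⟩,
     fun ⟨h2, h1⟩ => by rw [h2, h1]⟩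
  have hcoarse_wx := hcoarse w f x
  simp only [hlevel] at hcoarse_wx
  rw [Pr_congr p fun ω => and_left_comm, hcoarse_wx]

/-- If `W ⟂ Y | (Z, X)` (and moreover `Z ⟂ W | (Y', X)` for some
function `Y' = k ∘ Y` of `Y`), then for `φ x z := P(Y=1 | X=x, Z=z)` (binary `Y`)
one has `P(Y=1 | W=w, X=x, φ(X,Z)=f) = f` whenever the conditioning event has positive
probability; in particular this does not depend on `w`, hence `W ⟂ Y | (φ(X,Z), X)`. -/
theorem stmt7 {Ω 𝓦 𝓧 𝓨' 𝓩 : Type*} [Fintype Ω] [Fintype 𝓧] [Fintype 𝓩]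
    (p : Ω → ℝ) (hp : ∀ ω, 0 ≤ p ω) (hsum : ∑ ω, p ω = 1)
    (W : Ω → 𝓦) (X : Ω → 𝓧) (Z : Ω → 𝓩) (Y : Ω → Fin 2) (k : Fin 2 → 𝓨')
    (hWY : CondIndepOn p W Y (fun ω => (Z ω, X ω)))
    (hZW : CondIndepOn p Z W (fun ω => (k (Y ω), X ω)))
    (φ : 𝓧 → 𝓩 → ℝ)
    (hφ : ∀ x z, φ x z = condPr p (fun ω => Y ω = 1) (fun ω => X ω = x ∧ Z ω = z))
    (hpos : ∀ x z, 0 < Pr p (fun ω => X ω = x ∧ Z ω = z)) :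
    (∀ (w : 𝓦) (x : 𝓧) (f : ℝ),
      0 < Pr p (fun ω => W ω = w ∧ X ω = x ∧ φ x (Z ω) = f) →
      condPr p (fun ω => Y ω = 1) (fun ω => W ω = w ∧ X ω = x ∧ φ x (Z ω) = f) = f) ∧
    CondIndepOn p W Y (fun ω => (φ (X ω) (Z ω), X ω)) :=
  stmt7_general p W X Z Y hWY φ hφ hpos
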